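/- For the shift S_KM and every n ≥ 1: for every globally admissible simple pattern P : B_n → {black, white, red}, there exists Q : F_n → {black, white, red} such that P ∪ Q ∈ S_KM and, for every simple pattern P' : B_n → {black, white, red} with P' ∪ Q ∈ S_KM, the profile of P' is coordinatewise less than or equal to the profile of P. In other words, the profile maps (defined on simple patterns, undefined otherwise) together with the coordinatewise order on {0,…,n}^n form a family of ordered epitomes for S_KM. -/
import Mathlib


/-- A cell of the two-dimensional grid `ℤ²`. -/
abbrev Cell : Type := ℤ × ℤ

/-- A configuration over the alphabet `A` is a map `ℤ² → A`. -/
abbrev Config (A : Type) : Type := Cell → A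

/-- The translateCfg of a configuration `x` by `u` is `i ↦ x (i + u)`. -/
def translateCfg {A : Type} (u : Cell) (x : Config A) : Config A := fun i => x (i + u)

/-- The product topology on `A^(ℤ²)`, `A` being given the discrete topology. -/
def configTop (A : Type) : TopologicalSpace (Config A) :=
  @Pi.topologicalSpace Cell (fun _ => A) (fun _ => ⊥)

/-- A shift (space) over `A`: a set of configurations invariant under all translations
and closed in the product topology (`A` discrete). -/
def IsShiftSpace {A : Type} (S : Set (Config A)) : Prop :=
  (∀ (u : Cell) (x : Config A), x ∈ S → translateCfg u x ∈ S) ∧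
    @IsClosed (Config A) (configTop A) S

/-- A finite pattern: a function `P : F → A` with `F ⊆ ℤ²` finite. -/
structure Pattern (A : Type) where
  supp : Finset Cell
  val : supp → A

/-- `P` occurs in `x` if some translateCfg of `x` agrees with `P` on its support. -/
def Pattern.OccursIn {A : Type} (P : Pattern A) (x : Config A) : Prop :=
  ∃ u : Cell, ∀ i : P.supp, x ((i : Cell) + u) = P.val i

/-- The shift defined by a set `F` of forbidden finite patterns. -/
def shiftOf {A : Type} (F : Set (Pattern A)) : Set (Config A) :=
  { x | ∀ P ∈ F, ¬ P.OccursIn x }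

/-- A shift of finite type: a shift definable by a finite set of forbidden finite patterns. -/
def IsSFT {A : Type} (S : Set (Config A)) : Prop :=
  ∃ F : Set (Pattern A), F.Finite ∧ S = shiftOf F

/-- A sofic shift: a coordinatewise projection of a shift of finite type
over some finite alphabet. -/
def IsSofic {A : Type} (S : Set (Config A)) : Prop :=
  ∃ (A' : Type) (_ : Fintype A') (S' : Set (Config A')) (π : A' → A),
    IsSFT S' ∧ S = (fun y => π ∘ y) '' S'

/-- The cell of `ℤ²` corresponding to an index in the `n × n` square `{0,…,n−1}²`. -/
def toCell {n : ℕ} (q : Fin n × Fin n) : Cell := ((q.1 : ℤ), (q.2 : ℤ))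

/-- An `n × n` square pattern, i.e. a pattern with support `B_n = {0,…,n−1}²`. -/
abbrev SqPattern (A : Type) (n : ℕ) : Type := Fin n × Fin n → A

/-- An `n × n` square pattern occurs in `x` if some translateCfg of `x` agrees with it. -/
def SqOccursIn {A : Type} {n : ℕ} (P : SqPattern A n) (x : Config A) : Prop :=
  ∃ u : Cell, ∀ q : Fin n × Fin n, x (toCell q + u) = P q

/-- A pattern is globally admissible for `S` if it occurs in some configuration of `S`. -/
def SqGloballyAdmissible {A : Type} {n : ℕ} (S : Set (Config A)) (P : SqPattern A n) : Prop :=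
  ∃ x ∈ S, SqOccursIn P x

/-- Membership in the square `B_n = {0,…,n−1}² ⊆ ℤ²`. -/
def inBn (n : ℕ) (p : Cell) : Prop :=
  0 ≤ p.1 ∧ p.1 < (n : ℤ) ∧ 0 ≤ p.2 ∧ p.2 < (n : ℤ)

instance (n : ℕ) (p : Cell) : Decidable (inBn n p) := by unfold inBn; infer_instance

/-- A pattern on `F_n = ℤ² \ B_n`, the complement of the `n × n` square. -/
abbrev ExtPattern (A : Type) (n : ℕ) : Type := { p : Cell // ¬ inBn n p } → A

/-- The configuration `P ∪ Q`, equal to `P` on `B_n` and to `Q` on `F_n`. -/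
def glue {A : Type} {n : ℕ} (P : SqPattern A n) (Q : ExtPattern A n) : Config A :=
  fun p =>
    if h : inBn n p then
      P (⟨p.1.toNat, by unfold inBn at h; omega⟩, ⟨p.2.toNat, by unfold inBn at h; omega⟩)
    else Q ⟨p, h⟩

/-- The extension set `Ext_S(P) = {Q : F_n → A | P ∪ Q ∈ S}`. -/
def ExtSet {A : Type} {n : ℕ} (S : Set (Config A)) (P : SqPattern A n) :
    Set (ExtPattern A n) :=
  { Q | glue P Q ∈ S }

/-- A finite sequence of sets is an increasing-union chain if no set is contained in
the union of the preceding ones. -/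
def IncreasingUnionChain {β : Type} {m : ℕ} (T : Fin m → Set β) : Prop :=
  ∀ i : Fin m, ¬ T i ⊆ ⋃ (j : Fin m) (_ : j < i), T j

/-- The three-letter alphabet `{black, white, red}`. -/
inductive Letter : Type
  | black
  | white
  | red
deriving DecidableEq

/-- The shift on `ℤ²` defined by a family of forbidden square patterns. -/
def sqShiftOf {A : Type} (F : ∀ n : ℕ, Set (SqPattern A n)) : Set (Config A) :=
  { x | ∀ (n : ℕ) (P : SqPattern A n), P ∈ F n → ¬ SqOccursIn P x }

/-- The forbidden patterns of `S_KM`: the `n × n` square patterns (`n ≥ 2`) whose top row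
consists only of red letters and whose bottom row consists only of black letters. -/
def KMForbidden (n : ℕ) : Set (SqPattern Letter n) :=
  { P | 2 ≤ n ∧ ∀ i j : Fin n,
      ((j : ℕ) = 0 → P (i, j) = Letter.black) ∧
      ((j : ℕ) = n - 1 → P (i, j) = Letter.red) }

/-- The Kass–Madden shift `S_KM`, defined by forbidding all square patterns whose top row is
entirely red and whose bottom row is entirely black. -/
def SKM : Set (Config Letter) := sqShiftOf KMForbidden

/-- `P : B_n → {black, white, red}` is a simple pattern with profile `k : Fin n → ℕ`
(`k j ≤ n`): it has no red letter and its row `j` consists of `k j` black letters followed by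
`n − k j` white letters. -/
def IsSimpleWithProfile {n : ℕ} (P : SqPattern Letter n) (k : Fin n → ℕ) : Prop :=
  (∀ j, k j ≤ n) ∧
  ∀ i j : Fin n, P (i, j) = if (i : ℕ) < k j then Letter.black else Letter.white

theorem glue_pos'' {A : Type} {n : ℕ} (P : SqPattern A n) (Q : ExtPattern A n) (i j : Fin n) :
    glue P Q ((i : ℤ), (j : ℤ)) = P (i, j) := by
  have h : inBn n ((i : ℤ), (j : ℤ)) :=
    ⟨Int.natCast_nonneg _, by show ((i : ℕ) : ℤ) < (n : ℤ); exact_mod_cast i.isLt,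
     Int.natCast_nonneg _, by show ((j : ℕ) : ℤ) < (n : ℤ); exact_mod_cast j.isLt⟩
  unfold glue
  rw [dif_pos h]
  congr 1

theorem glue_neg' {A : Type} {n : ℕ} (P : SqPattern A n) (Q : ExtPattern A n) (a b : ℤ)
    (h : ¬ inBn n (a, b)) : glue P Q (a, b) = Q ⟨(a, b), h⟩ :=
  dif_neg h


/-- For every `n ≥ 1` and every globally admissible simple pattern `P : B_n → A` of `S_KM`
with profile `k`, there is `Q : F_n → A` such that `P ∪ Q ∈ S_KM` and every simple pattern
`P'` (with profile `k'`) compatible with `Q` has profile coordinatewise at most `k`; i.e. the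
profile maps together with the coordinatewise order form a family of ordered epitomes. -/
theorem SKM_profiles_are_ordered_epitomes (n : ℕ) (hn : 1 ≤ n)
    (P : SqPattern Letter n) (k : Fin n → ℕ)
    (hsimple : IsSimpleWithProfile P k) (hGA : SqGloballyAdmissible SKM P) :
    ∃ Q : ExtPattern Letter n, glue P Q ∈ SKM ∧
      ∀ (P' : SqPattern Letter n) (k' : Fin n → ℕ), IsSimpleWithProfile P' k' →
        glue P' Q ∈ SKM → ∀ j : Fin n, k' j ≤ k j := by
  classical
  obtain ⟨hkle, hPval⟩ := hsimple
  have hn' : (1 : ℤ) ≤ (n : ℤ) := by exact_mod_cast hn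
  -- the widths `t` and the red-row heights `r`
  set t : Fin n → ℤ := fun j => (2 * (n : ℤ) + 1) * ((n : ℤ) - (j : ℤ)) with ht
  set r : Fin n → ℤ := fun j => (j : ℤ) + (k j : ℤ) + t j with hrdef
  have hte : ∀ j : Fin n, t j = (2 * (n : ℤ) + 1) * ((n : ℤ) - (j : ℤ)) := fun j => by rw [ht]
  have hre : ∀ j : Fin n, r j = (j : ℤ) + (k j : ℤ) + t j := fun j => by rw [hrdef]
  have hjlt : ∀ j : Fin n, (j : ℤ) < (n : ℤ) := fun j => by exact_mod_cast j.isLt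
  have hjge : ∀ j : Fin n, (0 : ℤ) ≤ (j : ℤ) := fun j => Int.natCast_nonneg _
  have hkge : ∀ j : Fin n, (0 : ℤ) ≤ (k j : ℤ) := fun j => Int.natCast_nonneg _
  have hkn : ∀ j : Fin n, (k j : ℤ) ≤ (n : ℤ) := fun j => by exact_mod_cast hkle j
  have htn : ∀ j : Fin n, 2 * (n : ℤ) + 1 ≤ t j := by
    intro j
    have h1 : (1 : ℤ) ≤ (n : ℤ) - (j : ℤ) := by have := hjlt j; omega
    have h0 : (0 : ℤ) ≤ 2 * (n : ℤ) + 1 := by omega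
    calc (2 * (n : ℤ) + 1) = (2 * (n : ℤ) + 1) * 1 := by ring
      _ ≤ (2 * (n : ℤ) + 1) * ((n : ℤ) - (j : ℤ)) := mul_le_mul_of_nonneg_left h1 h0
      _ = t j := (hte j).symm
  have hrn : ∀ j : Fin n, (n : ℤ) ≤ r j := by
    intro j
    rw [hre]
    have := htn j; have := hkge j; have := hjge j
    linarith
  have hetd : ∀ j j' : Fin n, t j - t j' = (2 * (n : ℤ) + 1) * ((j' : ℤ) - (j : ℤ)) := by
    intro j j'; rw [hte, hte]; ring
  -- `r` is injective
  have hrlt : ∀ j j' : Fin n, (j : ℤ) < (j' : ℤ) → r j' < r j := by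
    intro j j' hlt
    have h1 : (1 : ℤ) ≤ (j' : ℤ) - (j : ℤ) := by omega
    have hprod : (1 : ℤ) * (2 * (n : ℤ) + 1) ≤ ((j' : ℤ) - (j : ℤ)) * (2 * (n : ℤ) + 1) :=
      mul_le_mul_of_nonneg_right h1 (by omega)
    have e : r j - r j' = ((j : ℤ) - (j' : ℤ)) + ((k j : ℤ) - (k j' : ℤ))
        + ((j' : ℤ) - (j : ℤ)) * (2 * (n : ℤ) + 1) := by
      rw [hre, hre, hte, hte]; ring
    have := hkn j'; have := hkge j; have := hjlt j'; have := hjge j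
    linarith
  have hrinj : ∀ j j' : Fin n, r j = r j' → j = j' := by
    intro j j' h
    rcases lt_trichotomy ((j : ℤ)) ((j' : ℤ)) with hlt | heq | hgt
    · exact absurd h (by have := hrlt j j' hlt; omega)
    · exact Fin.ext (by exact_mod_cast heq)
    · exact absurd h (by have := hrlt j' j hgt; omega)
  -- the extension pattern `Q`
  set Q : ExtPattern Letter n := fun p =>
    if ∃ j : Fin n, p.1.2 = (j : ℤ) ∧ -(t j) ≤ p.1.1 ∧ p.1.1 ≤ -1 then Letter.black
    else if ∃ j : Fin n, p.1.2 = r j ∧ -(t j) ≤ p.1.1 ∧ p.1.1 ≤ (k j : ℤ) then Letter.red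
    else Letter.white with hQ
  -- where the black letters of `glue P Q` can be
  have hblack : ∀ a b : ℤ, glue P Q (a, b) = Letter.black →
      ∃ j : Fin n, b = (j : ℤ) ∧ -(t j) ≤ a ∧ a ≤ (k j : ℤ) - 1 := by
    intro a b hab
    by_cases h : inBn n (a, b)
    · unfold inBn at h
      set ia : Fin n := ⟨a.toNat, by omega⟩ with hia
      set jb : Fin n := ⟨b.toNat, by omega⟩ with hjb
      have hcell : ((a, b) : Cell) = ((ia : ℤ), (jb : ℤ)) := by
        have h1 : ((ia : ℤ)) = a := by simp [hia, Int.toNat_of_nonneg h.1]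
        have h2 : ((jb : ℤ)) = b := by simp [hjb, Int.toNat_of_nonneg h.2.2.1]
        rw [h1, h2]
      rw [hcell, glue_pos'' P Q ia jb, hPval] at hab
      split_ifs at hab with hc
      refine ⟨jb, ?_, ?_, ?_⟩
      · simp [hjb]; omega
      · have := htn jb; omega
      · have hia' : (ia : ℕ) = a.toNat := rfl
        rw [hia'] at hc
        omega
    · rw [glue_neg' P Q a b h] at hab
      simp only [hQ] at hab
      split_ifs at hab with h1 h2
      obtain ⟨j', hj1, hj2, hj3⟩ := h1
      refine ⟨j', hj1, hj2, ?_⟩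
      have := hkge j'; omega
  -- where the red letters of `glue P Q` can be
  have hred : ∀ a b : ℤ, glue P Q (a, b) = Letter.red →
      ∃ j : Fin n, b = r j ∧ -(t j) ≤ a ∧ a ≤ (k j : ℤ) := by
    intro a b hab
    by_cases h : inBn n (a, b)
    · unfold inBn at h
      set ia : Fin n := ⟨a.toNat, by omega⟩ with hia
      set jb : Fin n := ⟨b.toNat, by omega⟩ with hjb
      have hcell : ((a, b) : Cell) = ((ia : ℤ), (jb : ℤ)) := by
        have h1 : ((ia : ℤ)) = a := by simp [hia, Int.toNat_of_nonneg h.1]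
        have h2 : ((jb : ℤ)) = b := by simp [hjb, Int.toNat_of_nonneg h.2.2.1]
        rw [h1, h2]
      rw [hcell, glue_pos'' P Q ia jb, hPval] at hab
      split_ifs at hab
    · rw [glue_neg' P Q a b h] at hab
      simp only [hQ] at hab
      split_ifs at hab with h1 h2
      exact h2
  refine ⟨Q, ?_, ?_⟩
  · -- `glue P Q ∈ SKM`
    intro m P₀ hP₀ hocc
    obtain ⟨hm2, hforb⟩ := hP₀
    obtain ⟨u, hu⟩ := hocc
    obtain ⟨u1, u2⟩ := u
    have hB : ∀ i : ℕ, i < m → glue P Q ((i : ℤ) + u1, u2) = Letter.black := by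
      intro i hi
      have h := hu (⟨i, hi⟩, ⟨0, by omega⟩)
      rw [(hforb ⟨i, hi⟩ ⟨0, by omega⟩).1 rfl] at h
      simpa [toCell, Prod.ext_iff] using h
    have hR : ∀ i : ℕ, i < m → glue P Q ((i : ℤ) + u1, ((m - 1 : ℕ) : ℤ) + u2) = Letter.red := by
      intro i hi
      have h := hu (⟨i, hi⟩, ⟨m - 1, by omega⟩)
      rw [(hforb ⟨i, hi⟩ ⟨m - 1, by omega⟩).2 rfl] at h
      simpa [toCell, Prod.ext_iff] using h
    obtain ⟨j1, e1, f1, g1⟩ := hblack _ _ (hB 0 (by omega))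
    obtain ⟨j1', e1', f1', g1'⟩ := hblack _ _ (hB (m - 1) (by omega))
    obtain ⟨j0, e2, f2, g2⟩ := hred _ _ (hR 0 (by omega))
    obtain ⟨j0', e2', f2', g2'⟩ := hred _ _ (hR (m - 1) (by omega))
    have hj1 : j1' = j1 := by
      apply Fin.ext
      have : ((j1' : ℕ) : ℤ) = ((j1 : ℕ) : ℤ) := by rw [← e1, ← e1']
      exact_mod_cast this
    have hj0 : j0' = j0 := hrinj _ _ (e2'.symm.trans e2)
    rw [hj1] at e1' f1' g1'
    rw [hj0] at e2' f2' g2'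
    rw [hre] at e2
    have hM1 : (1 : ℤ) ≤ ((m - 1 : ℕ) : ℤ) := by omega
    push_cast at f1 g1 f1' g1' f2 g2 f2' g2' e2 hM1
    rcases lt_trichotomy ((j0 : ℤ)) ((j1 : ℤ)) with hlt | heq | hgt
    · -- j0 below j1 : contradiction through the widths
      have h1 : (1 : ℤ) ≤ (j1 : ℤ) - (j0 : ℤ) := by omega
      have h3 : (3 : ℤ) ≤ 2 * (n : ℤ) + 1 := by omega
      have hp : 3 * ((j1 : ℤ) - (j0 : ℤ)) ≤ (2 * (n : ℤ) + 1) * ((j1 : ℤ) - (j0 : ℤ)) :=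
        mul_le_mul_of_nonneg_right h3 (by omega)
      have hd := hetd j0 j1
      linarith
    · have hjj : j0 = j1 := Fin.ext (by exact_mod_cast heq)
      subst hjj
      linarith
    · linarith
  · -- the trap direction
    intro P' k' hsimple' hmem' j
    obtain ⟨hk'le, hP'val⟩ := hsimple'
    by_contra hcon
    push_neg at hcon
    set T : ℕ := (2 * n + 1) * (n - (j : ℕ)) with hT
    have hTt : (T : ℤ) = t j := by
      rw [hT, Nat.cast_mul, Nat.cast_sub j.isLt.le, hte]
      push_cast
      ring
    have hT3 : 3 ≤ T := by
      have h1 : 1 ≤ n - (j : ℕ) := by have := j.isLt; omega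
      calc 3 = 3 * 1 := rfl
        _ ≤ (2 * n + 1) * (n - (j : ℕ)) := Nat.mul_le_mul (by omega) h1
    set m : ℕ := k j + T + 1 with hm
    have hm2 : 2 ≤ m := by omega
    set u : Cell := (-(T : ℤ), ((j : ℕ) : ℤ)) with hudef
    -- the key cells of `glue P' Q`
    have keyB : ∀ a : ℤ, -(T : ℤ) ≤ a → a ≤ (k j : ℤ) → glue P' Q (a, ((j : ℕ) : ℤ)) = Letter.black := by
      intro a ha1 ha2
      rcases lt_or_ge a 0 with hneg | hpos
      · have hnin : ¬ inBn n (a, ((j : ℕ) : ℤ)) := by unfold inBn; omega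
        rw [glue_neg' P' Q _ _ hnin]
        simp only [hQ]
        rw [if_pos]
        exact ⟨j, rfl, by rw [← hTt]; exact ha1, by omega⟩
      · have hkk' : (k j : ℤ) < (k' j : ℤ) := by exact_mod_cast hcon
        have hk'n : ((k' j : ℕ) : ℤ) ≤ (n : ℤ) := by exact_mod_cast hk'le j
        set ia : Fin n := ⟨a.toNat, by omega⟩ with hia
        have hcell : ((a, ((j : ℕ) : ℤ)) : Cell) = ((ia : ℤ), (j : ℤ)) := by
          have h1 : ((ia : ℤ)) = a := by simp [hia, Int.toNat_of_nonneg hpos]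
          rw [h1]
        rw [hcell, glue_pos'' P' Q ia j, hP'val]
        rw [if_pos]
        have : (ia : ℕ) = a.toNat := rfl
        omega
    have keyR : ∀ a : ℤ, -(T : ℤ) ≤ a → a ≤ (k j : ℤ) → glue P' Q (a, r j) = Letter.red := by
      intro a ha1 ha2
      have hnin : ¬ inBn n (a, r j) := by
        unfold inBn
        have := hrn j
        omega
      rw [glue_neg' P' Q _ _ hnin]
      simp only [hQ]
      rw [if_neg, if_pos]
      · exact ⟨j, rfl, by rw [← hTt]; exact ha1, ha2⟩
      · rintro ⟨j', hj'1, -, -⟩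
        have := hrn j
        have := hjlt j'
        omega
    -- build the forbidden pattern witnessed inside `glue P' Q`
    set P₀ : SqPattern Letter m := fun q => glue P' Q (toCell q + u) with hP₀
    have hforb : P₀ ∈ KMForbidden m := by
      refine ⟨hm2, ?_⟩
      intro i jj
      constructor
      · intro h0
        have hcell : toCell (i, jj) + u = ((i : ℤ) - (T : ℤ), ((j : ℕ) : ℤ)) := by
          simp only [toCell, hudef, Prod.mk_add_mk, Prod.ext_iff]
          constructor
          · ring
          · rw [h0]; push_cast; ring
        show glue P' Q (toCell (i, jj) + u) = Letter.black
        rw [hcell]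
        apply keyB <;> [skip; skip] <;>
          · have hi := i.isLt
            omega
      · intro hl
        have hcell : toCell (i, jj) + u = ((i : ℤ) - (T : ℤ), r j) := by
          simp only [toCell, hudef, Prod.mk_add_mk, Prod.ext_iff]
          constructor
          · ring
          · rw [hl, hre, ← hTt]
            push_cast [hm]
            ring
        show glue P' Q (toCell (i, jj) + u) = Letter.red
        rw [hcell]
        apply keyR <;>
          · have hi := i.isLt
            omega
    exact hmem' m P₀ hforb ⟨u, fun q => rfl⟩
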